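/- Let n ≥ k ≥ 2 and let A ∈ ℂ^{2^n×2^n} be an arbitrary matrix. For i, j ∈ {1, …, k} with i ≠ j, let Z̃_i, Z̃_j ∈ ℂ^{2^k×2^k} denote the matrices acting as the Pauli Z = diag(1, −1) on the i-th (respectively j-th) of k qubits and as identity on the other k − 1 qubits. Then ∫_{U(2^k)} tr((I_{2^{n−k}} ⊗ Z̃_i) · (I_{2^{n−k}} ⊗ U) A (I_{2^{n−k}} ⊗ U)†) · tr((I_{2^{n−k}} ⊗ Z̃_j) · (I_{2^{n−k}} ⊗ U) A (I_{2^{n−k}} ⊗ U)†) dU = 0, where dU is the Haar probability measure on the unitary group U(2^k). -/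

import Mathlib

/-!
Common definitions: Haar measure on the unitary group, the MPS ansatz circuit,
tensor-product embeddings of local operators, and the quantities `h₁`, `h₂`.
-/

noncomputable section

namespace MPS

open MeasureTheory Matrix
open scoped ComplexOrder

/-- The unitary group `U(d)` as matrices over `ℂ`. -/
abbrev UG (d : ℕ) : Submonoid (Matrix (Fin d) (Fin d) ℂ) := Matrix.unitaryGroup (Fin d) ℂ

instance matrixMeasurableSpace (m n : ℕ) : MeasurableSpace (Matrix (Fin m) (Fin n) ℂ) :=
  borel _

instance matrixBorelSpace (m n : ℕ) : BorelSpace (Matrix (Fin m) (Fin n) ℂ) := ⟨rfl⟩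

instance UGCompact (d : ℕ) : CompactSpace (UG d) := by
  have h1 : IsClosed {A : Matrix (Fin d) (Fin d) ℂ | star A * A = 1} :=
    isClosed_eq (continuous_star.matrix_mul continuous_id) continuous_const
  have h2 : IsClosed {A : Matrix (Fin d) (Fin d) ℂ | A * star A = 1} :=
    isClosed_eq (continuous_id.matrix_mul continuous_star) continuous_const
  have heq : (UG d : Set (Matrix (Fin d) (Fin d) ℂ)) =
      {A | star A * A = 1} ∩ {A | A * star A = 1} := by
    ext A
    simpa using Unitary.mem_iff
  have hclosed : IsClosed ((UG d : Set (Matrix (Fin d) (Fin d) ℂ))) := by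
    rw [heq]; exact h1.inter h2
  have hsub : (UG d : Set (Matrix (Fin d) (Fin d) ℂ)) ⊆
      (Set.univ.pi fun _ : Fin d => Set.univ.pi fun _ : Fin d => Metric.closedBall (0 : ℂ) 1) := by
    intro A hA i _ j _
    simpa using entry_norm_bound_of_unitary hA i j
  have hcpt : IsCompact ((UG d : Set (Matrix (Fin d) (Fin d) ℂ))) :=
    IsCompact.of_isClosed_subset
      (isCompact_univ_pi fun _ => isCompact_univ_pi fun _ => isCompact_closedBall 0 1)
      hclosed hsub
  exact isCompact_iff_compactSpace.mp hcpt

instance UGBorel (d : ℕ) : BorelSpace (UG d) :=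
  Subtype.borelSpace _

instance UGTopGroup (d : ℕ) : IsTopologicalGroup (UG d) where
  continuous_mul := continuous_mul
  continuous_inv := by
    exact Continuous.subtype_mk (continuous_star.comp continuous_subtype_val) _

/-- The Haar probability measure on the unitary group `U(d)`. -/
def haarUG (d : ℕ) : Measure (UG d) := Measure.haarMeasure ⊤

instance haarUGProb (d : ℕ) : IsProbabilityMeasure (haarUG d) := by
  constructor
  have := Measure.haarMeasure_self (G := UG d) (K₀ := ⊤)
  rw [TopologicalSpace.PositiveCompacts.coe_top] at this
  exact this

/-- The distribution of `T` independent Haar-random elements of `U(d)`. -/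
def haarTuple (T d : ℕ) : Measure (Fin T → UG d) := Measure.pi fun _ => haarUG d

instance haarTupleProb (T d : ℕ) : IsProbabilityMeasure (haarTuple T d) :=
  Measure.pi.instIsProbabilityMeasure (fun _ : Fin T => haarUG d)

/-- The `t`-th binary digit of `x` (from the least significant). -/
def bitAt (t x : ℕ) : ℕ := x / 2 ^ t % 2

/-- `bitAt` as an element of `Fin 2`. -/
def bitFin (t : ℕ) (x : ℕ) : Fin 2 := ⟨bitAt t x, Nat.mod_lt _ (by norm_num)⟩

/-- `I_{2^(n-k-b)} ⊗ U ⊗ I_{2^b}` for a `2^k × 2^k` matrix `U`, as a `2^n × 2^n` matrix,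
with big-endian ordering of the qubits (qubit 1 = most significant bit). -/
def embed (n k b : ℕ) (U : Matrix (Fin (2 ^ k)) (Fin (2 ^ k)) ℂ) :
    Matrix (Fin (2 ^ n)) (Fin (2 ^ n)) ℂ :=
  Matrix.of fun x y =>
    if (x : ℕ) / 2 ^ (k + b) = (y : ℕ) / 2 ^ (k + b) ∧ (x : ℕ) % 2 ^ b = (y : ℕ) % 2 ^ b then
      U ⟨(x : ℕ) / 2 ^ b % 2 ^ k, Nat.mod_lt _ (Nat.two_pow_pos k)⟩
        ⟨(y : ℕ) / 2 ^ b % 2 ^ k, Nat.mod_lt _ (Nat.two_pow_pos k)⟩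
    else 0

/-- The MPS ansatz circuit `C = ∏_{p=1}^{T} (I_{2^{n-k-p+1}} ⊗ U_p ⊗ I_{2^{p-1}})`, the
product taken with the `p = 1` factor leftmost. -/
def mpsCircuit (n k : ℕ) {T : ℕ} (U : Fin T → Matrix (Fin (2 ^ k)) (Fin (2 ^ k)) ℂ) :
    Matrix (Fin (2 ^ n)) (Fin (2 ^ n)) ℂ :=
  ((List.finRange T).map fun p => embed n k p.1 (U p)).prod

/-- The MPS circuit built from unitaries. -/
def circuitOf (n k : ℕ) {T : ℕ} (U : Fin T → UG (2 ^ k)) :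
    Matrix (Fin (2 ^ n)) (Fin (2 ^ n)) ℂ :=
  mpsCircuit n k fun p => (U p : Matrix (Fin (2 ^ k)) (Fin (2 ^ k)) ℂ)

/-- The global observable `(|0⟩⟨0|)^{⊗ n} = |0…0⟩⟨0…0|`. -/
def proj00 (n : ℕ) : Matrix (Fin (2 ^ n)) (Fin (2 ^ n)) ℂ :=
  Matrix.single 0 0 1

/-- The Pauli `Z` on qubit `i` (1-indexed, qubit 1 = most significant bit) of `n` qubits,
tensored with the identity elsewhere. -/
def pauliZ (n i : ℕ) : Matrix (Fin (2 ^ n)) (Fin (2 ^ n)) ℂ :=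
  Matrix.diagonal fun x => if bitAt (n - i) (x : ℕ) = 0 then 1 else -1

/-- The projector `|0⟩⟨0|_i` on qubit `i` (1-indexed) of `n` qubits, tensored with the
identity elsewhere. -/
def proj0At (n i : ℕ) : Matrix (Fin (2 ^ n)) (Fin (2 ^ n)) ℂ :=
  Matrix.diagonal fun x => if bitAt (n - i) (x : ℕ) = 0 then 1 else 0

/-- `M 1 ⊗ M 2 ⊗ ⋯ ⊗ M n` of single-qubit matrices, as a `2^n × 2^n` matrix. -/
def tensorProd (n : ℕ) (M : Fin n → Matrix (Fin 2) (Fin 2) ℂ) :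
    Matrix (Fin (2 ^ n)) (Fin (2 ^ n)) ℂ :=
  Matrix.of fun x y =>
    ∏ i : Fin n, M i (bitFin (n - 1 - (i : ℕ)) (x : ℕ)) (bitFin (n - 1 - (i : ℕ)) (y : ℕ))

/-- The entrywise 1-norm `‖A‖₁ = Σ_{ij} |A_{ij}|`. -/
def entryOneNorm {d : ℕ} (A : Matrix (Fin d) (Fin d) ℂ) : ℝ :=
  ∑ i, ∑ j, ‖A i j‖

/-- `h₁(σ) = min over single-qubit unitaries V₁, …, V_n of ‖(V₁⊗⋯⊗V_n) σ (V₁⊗⋯⊗V_n)†‖₁²`. -/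
def h1 (n : ℕ) (σ : Matrix (Fin (2 ^ n)) (Fin (2 ^ n)) ℂ) : ℝ :=
  ⨅ V : Fin n → UG 2,
    entryOneNorm (tensorProd n (fun i => (V i : Matrix (Fin 2) (Fin 2) ℂ)) * σ *
      (tensorProd n fun i => (V i : Matrix (Fin 2) (Fin 2) ℂ))ᴴ) ^ 2

/-- The trace norm `‖A‖_tr = tr √(A† A)`. -/
def traceNorm {d : ℕ} (A : Matrix (Fin d) (Fin d) ℂ) : ℝ :=
  ((Matrix.posSemidef_conjTranspose_mul_self A).1.eigenvectorUnitary.1 *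
    diagonal (((↑) : ℝ → ℂ) ∘ (√·) ∘ (Matrix.posSemidef_conjTranspose_mul_self A).1.eigenvalues) *
    (star (Matrix.posSemidef_conjTranspose_mul_self A).1.eigenvectorUnitary :
      Matrix (Fin d) (Fin d) ℂ)).trace.re

/-- `h₂(σ) = min over single-qubit states ρ₁, …, ρ_n of ‖ρ₁⊗⋯⊗ρ_n − σ‖_tr`. -/
def h2 (n : ℕ) (σ : Matrix (Fin (2 ^ n)) (Fin (2 ^ n)) ℂ) : ℝ :=
  ⨅ ρ : Fin n → {ρ : Matrix (Fin 2) (Fin 2) ℂ // ρ.PosSemidef ∧ ρ.trace = 1},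
    traceNorm (tensorProd n (fun i => (ρ i : Matrix (Fin 2) (Fin 2) ℂ)) - σ)

end MPS

open MeasureTheory Matrix
open scoped ComplexOrder Kronecker

namespace Matrix

variable {m R : Type*} [Fintype m] [CommRing R] [StarRing R]

lemma trace_mul_conj_mul_conj (Z V U B : Matrix m m R) :
    trace (Z * (V * U * B * (V * U)ᴴ)) = trace (Vᴴ * Z * V * (U * B * Uᴴ)) := by
  simp only [conjTranspose_mul, ← Matrix.mul_assoc]
  rw [trace_mul_comm]
  simp only [Matrix.mul_assoc]

variable [DecidableEq m]

lemma permMatrix_conjTranspose_mul_diagonal_mul (σ : Equiv.Perm m) (d : m → R) :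
    (σ.permMatrix R)ᴴ * diagonal d * σ.permMatrix R = diagonal (d ∘ σ.symm) := by
  rw [conjTranspose_permMatrix, Equiv.Perm.permMatrix, PEquiv.toMatrix_toPEquiv_mul,
    PEquiv.mul_toMatrix_toPEquiv, submatrix_submatrix]
  exact submatrix_diagonal_equiv d σ.symm

lemma permMatrix_mem_unitaryGroup (σ : Equiv.Perm m) :
    σ.permMatrix R ∈ unitaryGroup m R := by
  rw [mem_unitaryGroup_iff', star_eq_conjTranspose, conjTranspose_permMatrix, ← permMatrix_mul,
    mul_inv_cancel, permMatrix_one]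

end Matrix

namespace MPS

def splitLowBits {n k : ℕ} (hkn : k ≤ n) : Fin (2 ^ (n - k)) × Fin (2 ^ k) ≃ Fin (2 ^ n) :=
  finProdFinEquiv.trans (finCongr (by rw [← pow_add, Nat.sub_add_cancel hkn]))

lemma splitLowBits_symm_apply {n k : ℕ} (hkn : k ≤ n) (x : Fin (2 ^ n)) :
    (splitLowBits hkn).symm x =
      (⟨x / 2 ^ k, Nat.div_lt_of_lt_mul (by rw [← pow_add, Nat.add_sub_cancel' hkn]; exact x.2)⟩,
        ⟨x % 2 ^ k, Nat.mod_lt _ (Nat.two_pow_pos k)⟩) := by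
  rw [Equiv.symm_apply_eq]
  ext
  simp [splitLowBits, Nat.mod_add_div]

lemma embed_zero_eq_reindex_kronecker {n k : ℕ} (hkn : k ≤ n)
    (U : Matrix (Fin (2 ^ k)) (Fin (2 ^ k)) ℂ) :
    embed n k 0 U = reindex (splitLowBits hkn) (splitLowBits hkn) (1 ⊗ₖ U) := by
  ext x y
  rw [reindex_apply, submatrix_apply, splitLowBits_symm_apply, splitLowBits_symm_apply]
  by_cases hxy : (x : ℕ) / 2 ^ k = (y : ℕ) / 2 ^ k <;>
    simp [embed, hxy, one_apply, Fin.ext_iff, Nat.mod_one]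

lemma embed_zero_mul {n k : ℕ} (hkn : k ≤ n) (U V : Matrix (Fin (2 ^ k)) (Fin (2 ^ k)) ℂ) :
    embed n k 0 (U * V) = embed n k 0 U * embed n k 0 V := by
  simp only [embed_zero_eq_reindex_kronecker hkn, reindex_apply, submatrix_mul_equiv,
    ← mul_kronecker_mul, Matrix.one_mul]

lemma embed_zero_conjTranspose {n k : ℕ} (hkn : k ≤ n)
    (U : Matrix (Fin (2 ^ k)) (Fin (2 ^ k)) ℂ) :
    embed n k 0 Uᴴ = (embed n k 0 U)ᴴ := by
  simp only [embed_zero_eq_reindex_kronecker hkn, reindex_apply, conjTranspose_submatrix,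
    conjTranspose_kronecker, conjTranspose_one]

lemma embed_neg (n k b : ℕ) (U : Matrix (Fin (2 ^ k)) (Fin (2 ^ k)) ℂ) :
    embed n k b (-U) = -embed n k b U := by
  ext x y
  by_cases h : (x : ℕ) / 2 ^ (k + b) = (y : ℕ) / 2 ^ (k + b) ∧ (x : ℕ) % 2 ^ b = (y : ℕ) % 2 ^ b
  <;> simp [embed, h]

lemma trace_embed_zero_mul_conj {n k : ℕ} (hkn : k ≤ n)
    (Z V U : Matrix (Fin (2 ^ k)) (Fin (2 ^ k)) ℂ) (A : Matrix (Fin (2 ^ n)) (Fin (2 ^ n)) ℂ) :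
    trace (embed n k 0 Z * (embed n k 0 (V * U) * A * (embed n k 0 (V * U))ᴴ)) =
      trace (embed n k 0 (Vᴴ * Z * V) * (embed n k 0 U * A * (embed n k 0 U)ᴴ)) := by
  rw [embed_zero_mul hkn, trace_mul_conj_mul_conj, embed_zero_mul hkn, embed_zero_mul hkn,
    embed_zero_conjTranspose hkn]

lemma bitAt_eq_toNat_testBit (t x : ℕ) : bitAt t x = (x.testBit t).toNat := by
  rcases Nat.mod_two_eq_zero_or_one (x / 2 ^ t) with h | h <;>
    simp [bitAt, h, Nat.testBit_eq_decide_div_mod_eq]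

lemma bitAt_xor_two_pow_self (t x : ℕ) : bitAt t (x ^^^ 2 ^ t) = 1 - bitAt t x := by
  cases h : x.testBit t <;> simp [bitAt_eq_toNat_testBit, Nat.testBit_xor, h]

lemma bitAt_xor_two_pow_of_ne {s t : ℕ} (hst : s ≠ t) (x : ℕ) :
    bitAt s (x ^^^ 2 ^ t) = bitAt s x := by
  simp [bitAt_eq_toNat_testBit, Nat.testBit_xor, Ne.symm hst]

/-- The Pauli `X` on bit `t`, as a permutation of the computational basis. -/
def bitFlip (k t : ℕ) (ht : t < k) : Equiv.Perm (Fin (2 ^ k)) :=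
  Function.Involutive.toPerm
    (fun x => ⟨x ^^^ 2 ^ t, Nat.xor_lt_two_pow x.2 (Nat.pow_lt_pow_right one_lt_two ht)⟩)
    fun x => Fin.ext (by simp)

@[simp]
lemma bitFlip_symm (k t : ℕ) (ht : t < k) : (bitFlip k t ht).symm = bitFlip k t ht :=
  Function.Involutive.toPerm_symm _

@[simp]
lemma bitFlip_apply_val (k t : ℕ) (ht : t < k) (x : Fin (2 ^ k)) :
    (bitFlip k t ht x : ℕ) = x ^^^ 2 ^ t :=
  rfl

lemma conj_permMatrix_bitFlip_pauliZ_self {k i t : ℕ} (ht : t < k) (hit : k - i = t) :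
    ((bitFlip k t ht).permMatrix ℂ)ᴴ * pauliZ k i * (bitFlip k t ht).permMatrix ℂ =
      -pauliZ k i := by
  rw [pauliZ, permMatrix_conjTranspose_mul_diagonal_mul, diagonal_neg]
  congr 1
  ext x
  subst hit
  simp only [Function.comp_apply, bitFlip_symm, bitFlip_apply_val, bitAt_xor_two_pow_self]
  rcases Nat.mod_two_eq_zero_or_one ((x : ℕ) / 2 ^ (k - i)) with h | h <;> simp [bitAt, h]

lemma conj_permMatrix_bitFlip_pauliZ_of_ne {k i t : ℕ} (ht : t < k) (hit : k - i ≠ t) :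
    ((bitFlip k t ht).permMatrix ℂ)ᴴ * pauliZ k i * (bitFlip k t ht).permMatrix ℂ =
      pauliZ k i := by
  rw [pauliZ, permMatrix_conjTranspose_mul_diagonal_mul]
  congr 1
  ext x
  simp [bitAt_xor_two_pow_of_ne hit]

end MPS

instance MPS.haarUG_isMulLeftInvariant (d : ℕ) : (MPS.haarUG d).IsMulLeftInvariant :=
  inferInstanceAs (Measure.haarMeasure ⊤).IsMulLeftInvariant

theorem haar_second_moment_local_Z_general (n k : ℕ) (hkn : k ≤ n)
    (A : Matrix (Fin (2 ^ n)) (Fin (2 ^ n)) ℂ) (i j : ℕ)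
    (hi1 : 1 ≤ i) (hik : i ≤ k) (hjk : j ≤ k) (hij : i ≠ j) :
    ∫ U : MPS.UG (2 ^ k),
        Matrix.trace (MPS.embed n k 0 (MPS.pauliZ k i) *
          (MPS.embed n k 0 (U : Matrix (Fin (2 ^ k)) (Fin (2 ^ k)) ℂ) * A *
            (MPS.embed n k 0 (U : Matrix (Fin (2 ^ k)) (Fin (2 ^ k)) ℂ))ᴴ)) *
        Matrix.trace (MPS.embed n k 0 (MPS.pauliZ k j) *
          (MPS.embed n k 0 (U : Matrix (Fin (2 ^ k)) (Fin (2 ^ k)) ℂ) * A *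
            (MPS.embed n k 0 (U : Matrix (Fin (2 ^ k)) (Fin (2 ^ k)) ℂ))ᴴ))
      ∂ MPS.haarUG (2 ^ k) = 0 := by
  have ht : k - i < k := by omega
  -- The Pauli `X` on qubit `i` anticommutes with `Z̃_i` and commutes with `Z̃_j`, so the Haar
  -- translation `U ↦ X U` negates the integrand.
  let pauliX : MPS.UG (2 ^ k) :=
    ⟨(MPS.bitFlip k (k - i) ht).permMatrix ℂ, permMatrix_mem_unitaryGroup _⟩
  refine integral_eq_zero_of_mul_left_eq_neg (g := pauliX) fun U => ?_
  rw [Submonoid.coe_mul, MPS.trace_embed_zero_mul_conj hkn, MPS.trace_embed_zero_mul_conj hkn,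
    MPS.conj_permMatrix_bitFlip_pauliZ_self ht rfl,
    MPS.conj_permMatrix_bitFlip_pauliZ_of_ne ht (by omega), MPS.embed_neg, Matrix.neg_mul,
    trace_neg, neg_mul]

/-- Second-moment Haar integral: for any `A ∈ ℂ^{2^n × 2^n}` and distinct
`i, j ∈ {1, …, k}`, the Haar average of
`tr((I ⊗ Z̃_i) (I ⊗ U) A (I ⊗ U)†) · tr((I ⊗ Z̃_j) (I ⊗ U) A (I ⊗ U)†)` vanishes. -/
theorem haar_second_moment_local_Z (n k : ℕ) (hk : 2 ≤ k) (hkn : k ≤ n)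
    (A : Matrix (Fin (2 ^ n)) (Fin (2 ^ n)) ℂ) (i j : ℕ)
    (hi1 : 1 ≤ i) (hik : i ≤ k) (hj1 : 1 ≤ j) (hjk : j ≤ k) (hij : i ≠ j) :
    ∫ U : MPS.UG (2 ^ k),
        Matrix.trace (MPS.embed n k 0 (MPS.pauliZ k i) *
          (MPS.embed n k 0 (U : Matrix (Fin (2 ^ k)) (Fin (2 ^ k)) ℂ) * A *
            (MPS.embed n k 0 (U : Matrix (Fin (2 ^ k)) (Fin (2 ^ k)) ℂ))ᴴ)) *
        Matrix.trace (MPS.embed n k 0 (MPS.pauliZ k j) *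
          (MPS.embed n k 0 (U : Matrix (Fin (2 ^ k)) (Fin (2 ^ k)) ℂ) * A *
            (MPS.embed n k 0 (U : Matrix (Fin (2 ^ k)) (Fin (2 ^ k)) ℂ))ᴴ))
      ∂ MPS.haarUG (2 ^ k) = 0 :=
  haar_second_moment_local_Z_general n k hkn A i j hi1 hik hjk hij
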